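/- arXiv:2505.01276 — 4 statements merged into one kernel-verified Lean document; each statement's English description precedes it below -/
import Mathlib

section
/- Let k be a field, let V1, V2, V3 be vector spaces over k, let D be a linear subspace of V1 × V2, and let m : D → V3 be a surjective linear map. Let E := {(α,β) ∈ V1* × V2* : there exists γ ∈ V3* with γ(m(u,v)) = α(u) + β(v) for all (u,v) ∈ D}, and for (α,β) ∈ E let n(α,β) denote the unique such γ. Define Φ : (V3 × V3*) × (V1 × V1*) × (V2 × V2*) → (V3 × V1 × V2) × (V3* × V1* × V2*) by Φ((w,γ),(u,α),(v,β)) := ((w,u,v),(γ,−α,−β)). Then the image under Φ of the set {((m(u,v), n(α,β)), (u,α), (v,β)) : (u,v) ∈ D, (α,β) ∈ E} equals gr(m) × ann(gr(m)), where gr(m) := {(m(u,v), u, v) : (u,v) ∈ D} and ann(gr(m)) ⊆ V3* × V1* × V2* is its annihilator. -/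
/-! The sign change in `Φ` turns the annihilation condition `γ(m(u,v)) + α(u) + β(v) = 0`
into the defining equation of `E` for `(-α, -β)` with witness `γ`; since `m` is surjective
this witness is unique, hence equal to `n(-α, -β)`. -/

open Module

/-- The graph of the surjective linear map `m : D → V3`, viewed inside `V3 × V1 × V2`. -/
def grm {k : Type*} [Field k]
    {V1 V2 V3 : Type*} [AddCommGroup V1] [Module k V1]
    [AddCommGroup V2] [Module k V2] [AddCommGroup V3] [Module k V3]
    (D : Submodule k (V1 × V2)) (m : D →ₗ[k] V3) : Set (V3 × V1 × V2) :=
  {p | ∃ d : D, p = (m d, (d : V1 × V2).1, (d : V1 × V2).2)}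

/-- The annihilator of `gr(m)` inside `V3* × V1* × V2*`. -/
def annGrm {k : Type*} [Field k]
    {V1 V2 V3 : Type*} [AddCommGroup V1] [Module k V1]
    [AddCommGroup V2] [Module k V2] [AddCommGroup V3] [Module k V3]
    (D : Submodule k (V1 × V2)) (m : D →ₗ[k] V3) :
    Set (Dual k V3 × Dual k V1 × Dual k V2) :=
  {q | ∀ p ∈ grm D m, q.1 p.1 + q.2.1 p.2.1 + q.2.2 p.2.2 = 0}

/-- The set `E` of pairs `(α, β)` admitting a (necessarily unique) `γ` with
`γ(m(u,v)) = α(u) + β(v)` on `D`. -/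
def Eset {k : Type*} [Field k]
    {V1 V2 V3 : Type*} [AddCommGroup V1] [Module k V1]
    [AddCommGroup V2] [Module k V2] [AddCommGroup V3] [Module k V3]
    (D : Submodule k (V1 × V2)) (m : D →ₗ[k] V3) : Set (Dual k V1 × Dual k V2) :=
  {p | ∃ γ : Dual k V3, ∀ d : D, γ (m d) = p.1 (d : V1 × V2).1 + p.2 (d : V1 × V2).2}

section

variable {k V1 V2 V3 : Type*} [Field k] [AddCommGroup V1] [Module k V1]
  [AddCommGroup V2] [Module k V2] [AddCommGroup V3] [Module k V3]
  {D : Submodule k (V1 × V2)} {m : D →ₗ[k] V3}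

theorem mem_annGrm_iff {γ : Dual k V3} {α : Dual k V1} {β : Dual k V2} :
    (γ, α, β) ∈ annGrm D m ↔
      ∀ d : D, γ (m d) = (-α) (d : V1 × V2).1 + (-β) (d : V1 × V2).2 := by
  refine ⟨fun h d => ?_, fun h _ ⟨d, hd⟩ => ?_⟩
  · simp only [LinearMap.neg_apply]
    linear_combination h _ ⟨d, rfl⟩
  · subst hd
    have hγ := h d
    simp only [LinearMap.neg_apply] at hγ
    linear_combination hγ

theorem Eset.witness_unique (hm : Function.Surjective m) {p : Dual k V1 × Dual k V2}
    {γ γ' : Dual k V3} (hγ : ∀ d : D, γ (m d) = p.1 (d : V1 × V2).1 + p.2 (d : V1 × V2).2)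
    (hγ' : ∀ d : D, γ' (m d) = p.1 (d : V1 × V2).1 + p.2 (d : V1 × V2).2) : γ = γ' :=
  LinearMap.ext fun w => by
    obtain ⟨d, rfl⟩ := hm w
    rw [hγ, hγ']

end

theorem stmt1 {k : Type*} [Field k]
    {V1 V2 V3 : Type*} [AddCommGroup V1] [Module k V1]
    [AddCommGroup V2] [Module k V2] [AddCommGroup V3] [Module k V3]
    (D : Submodule k (V1 × V2)) (m : D →ₗ[k] V3) (hm : Function.Surjective m)
    -- `n` assigns to each `(α, β) ∈ E` the unique `γ` as above
    (n : Dual k V1 × Dual k V2 → Dual k V3)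
    (hn : ∀ p ∈ Eset D m, ∀ d : D,
      n p (m d) = p.1 (d : V1 × V2).1 + p.2 (d : V1 × V2).2)
    -- the isomorphism Φ
    (Φ : (V3 × Dual k V3) × (V1 × Dual k V1) × (V2 × Dual k V2) →
        (V3 × V1 × V2) × (Dual k V3 × Dual k V1 × Dual k V2))
    (hΦ : ∀ x, Φ x = ((x.1.1, x.2.1.1, x.2.2.1), (x.1.2, -x.2.1.2, -x.2.2.2))) :
    Φ '' {x | ∃ (d : D) (p : Dual k V1 × Dual k V2), p ∈ Eset D m ∧
        x = ((m d, n p), ((d : V1 × V2).1, p.1), ((d : V1 × V2).2, p.2))}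
      = grm D m ×ˢ annGrm D m := by
  ext ⟨g, γ, α, β⟩
  constructor
  · rintro ⟨x, ⟨d, p, hp, rfl⟩, hx⟩
    rw [← hx, hΦ]
    exact ⟨⟨d, rfl⟩, mem_annGrm_iff.2 fun d' => by simpa using hn p hp d'⟩
  · rintro ⟨⟨d, rfl⟩, hann⟩
    have hγ := mem_annGrm_iff.1 hann
    have hmem : (-α, -β) ∈ Eset D m := ⟨γ, hγ⟩
    refine ⟨((m d, γ), ((d : V1 × V2).1, -α), ((d : V1 × V2).2, -β)),
      ⟨d, (-α, -β), hmem, ?_⟩, by simp [hΦ]⟩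
    rw [Eset.witness_unique hm (hn _ hmem) hγ]
end

section
/- Let K be a real Lie algebra and ∂ : K* → K a linear map that is symmetric and K-invariant. Then the double bracket ⁅(γ,k),(γ',k')⁆ := (k·γ' − k'·γ + (∂γ)·γ', [k,k']) on K* × K is bilinear, antisymmetric, and satisfies the Jacobi identity; hence it makes K* × K into a real Lie algebra. -/
/-!
Invariance of `δ` says precisely that `coad (δ γ) γ'` is antisymmetric in `γ, γ'`, which is the
antisymmetry of the bracket. Combined with symmetry it makes `δ` equivariant,
`δ (k·γ) = ⁅k, δ γ⁆`. Since `coad` is a representation of `K`, the `K*`-component of the Jacobi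
identity then reduces to `coad (δ α) (c·β) = c·(coad (δ α) β) + coad (δ β) (c·α)`, which is
equivariance and antisymmetry once more, applied to `coad ⁅δ α, c⁆ β`.
-/

open Module

/-- The coadjoint action of `k ∈ K` on `γ ∈ K*`: `(k·γ)(x) = -γ ⁅k, x⁆`. -/
def coad {K : Type*} [LieRing K] [LieAlgebra ℝ K] (k : K) (γ : Dual ℝ K) :
    Dual ℝ K :=
  -(γ ∘ₗ (LieAlgebra.ad ℝ K k))

/-- The double bracket on `K* × K` induced by a symmetric `K`-invariant map `δ : K* → K`. -/
def dblBracket {K : Type*} [LieRing K] [LieAlgebra ℝ K] (δ : Dual ℝ K →ₗ[ℝ] K)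
    (e f : Dual ℝ K × K) : Dual ℝ K × K :=
  (coad e.2 f.1 - coad f.2 e.1 + coad (δ e.1) f.1, ⁅e.2, f.2⁆)

section
variable {K : Type*} [LieRing K] [LieAlgebra ℝ K]

lemma coad_apply (k : K) (γ : Dual ℝ K) (x : K) : coad k γ x = -γ ⁅k, x⁆ := rfl

lemma coad_add_left (a b : K) (γ : Dual ℝ K) : coad (a + b) γ = coad a γ + coad b γ := by
  ext x; simp [coad_apply]; ring

lemma coad_sub_left (a b : K) (γ : Dual ℝ K) : coad (a - b) γ = coad a γ - coad b γ := by
  ext x; simp [coad_apply]; ring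

lemma coad_neg_left (k : K) (γ : Dual ℝ K) : coad (-k) γ = -coad k γ := by
  ext x; simp only [coad_apply, neg_lie, map_neg, LinearMap.neg_apply]

lemma coad_smul_left (r : ℝ) (k : K) (γ : Dual ℝ K) : coad (r • k) γ = r • coad k γ := by
  ext x; simp [coad_apply]

lemma coad_add_right (k : K) (γ γ' : Dual ℝ K) : coad k (γ + γ') = coad k γ + coad k γ' := by
  ext x; simp [coad_apply]; ring

lemma coad_sub_right (k : K) (γ γ' : Dual ℝ K) : coad k (γ - γ') = coad k γ - coad k γ' := by
  ext x; simp [coad_apply]; ring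

lemma coad_smul_right (r : ℝ) (k : K) (γ : Dual ℝ K) : coad k (r • γ) = r • coad k γ := by
  ext x; simp [coad_apply]

lemma coad_lie (a b : K) (γ : Dual ℝ K) :
    coad ⁅a, b⁆ γ = coad a (coad b γ) - coad b (coad a γ) := by
  ext x; simp [coad_apply, lie_lie]

variable (δ : Dual ℝ K →ₗ[ℝ] K)

lemma dblBracket_add_left (e f g : Dual ℝ K × K) :
    dblBracket δ (e + f) g = dblBracket δ e g + dblBracket δ f g := by
  simp only [dblBracket, Prod.fst_add, Prod.snd_add, map_add, coad_add_left, coad_add_right,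
    add_lie, Prod.mk_add_mk, Prod.mk.injEq, and_true]
  abel

lemma dblBracket_add_right (e f g : Dual ℝ K × K) :
    dblBracket δ e (f + g) = dblBracket δ e f + dblBracket δ e g := by
  simp only [dblBracket, Prod.fst_add, Prod.snd_add, coad_add_left, coad_add_right,
    lie_add, Prod.mk_add_mk, Prod.mk.injEq, and_true]
  abel

lemma dblBracket_smul_left (r : ℝ) (e g : Dual ℝ K × K) :
    dblBracket δ (r • e) g = r • dblBracket δ e g := by
  simp only [dblBracket, Prod.smul_fst, Prod.smul_snd, map_smul, coad_smul_left,
    coad_smul_right, smul_lie, smul_sub, smul_add, Prod.smul_mk]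

lemma dblBracket_smul_right (r : ℝ) (e g : Dual ℝ K × K) :
    dblBracket δ e (r • g) = r • dblBracket δ e g := by
  simp only [dblBracket, Prod.smul_fst, Prod.smul_snd, coad_smul_left, coad_smul_right,
    lie_smul, smul_sub, smul_add, Prod.smul_mk]

variable {δ}
  (hsym : ∀ γ γ' : Dual ℝ K, γ' (δ γ) = γ (δ γ'))
  (hinv : ∀ (k : K) (γ γ' : Dual ℝ K), γ ⁅k, δ γ'⁆ + γ' ⁅k, δ γ⁆ = 0)

include hinv in
lemma coad_map_anticomm (γ γ' : Dual ℝ K) : coad (δ γ) γ' = -coad (δ γ') γ := by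
  ext x
  have h := hinv x γ γ'
  rw [← lie_skew, ← lie_skew x, map_neg, map_neg] at h
  simp only [coad_apply, LinearMap.neg_apply]
  linarith

include hsym hinv in
lemma map_coad (k : K) (γ : Dual ℝ K) : δ (coad k γ) = ⁅k, δ γ⁆ := by
  refine sub_eq_zero.mp <| (forall_dual_apply_eq_zero_iff ℝ _).mp fun φ => ?_
  have h := hsym (coad k γ) φ
  rw [coad_apply] at h
  rw [map_sub, sub_eq_zero, h]
  linarith [hinv k γ φ]

include hsym hinv in
lemma coad_map_coad (α β : Dual ℝ K) (c : K) :
    coad (δ α) (coad c β) = coad c (coad (δ α) β) + coad (δ β) (coad c α) := by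
  have h : coad ⁅δ α, c⁆ β = coad (δ β) (coad c α) := by
    rw [← lie_skew, ← map_coad hsym hinv, coad_neg_left, coad_map_anticomm hinv, neg_neg]
  rw [← h, coad_lie]
  abel

include hinv in
lemma dblBracket_anticomm (e f : Dual ℝ K × K) : dblBracket δ e f = -dblBracket δ f e := by
  simp only [dblBracket, Prod.neg_mk, coad_map_anticomm hinv e.1 f.1, ← lie_skew f.2, neg_neg]
  congr 1
  abel

include hsym hinv in
lemma dblBracket_leibniz (e f g : Dual ℝ K × K) :
    dblBracket δ e (dblBracket δ f g)
      = dblBracket δ (dblBracket δ e f) g + dblBracket δ f (dblBracket δ e g) := by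
  obtain ⟨α, a⟩ := e
  obtain ⟨β, b⟩ := f
  obtain ⟨γ, c⟩ := g
  simp only [dblBracket, Prod.mk_add_mk, Prod.mk.injEq, map_add, map_sub, map_coad hsym hinv,
    coad_add_left, coad_sub_left, coad_lie, coad_add_right, coad_sub_right,
    coad_map_coad hsym hinv α β c]
  exact ⟨by abel, leibniz_lie a b c⟩
end

theorem stmt3 {K : Type*} [LieRing K] [LieAlgebra ℝ K]
    (δ : Dual ℝ K →ₗ[ℝ] K)
    (hsym : ∀ γ γ' : Dual ℝ K, γ' (δ γ) = γ (δ γ'))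
    (hinv : ∀ (k : K) (γ γ' : Dual ℝ K), γ ⁅k, δ γ'⁆ + γ' ⁅k, δ γ⁆ = 0) :
    -- bilinearity
    (∀ (e f g : Dual ℝ K × K) (r : ℝ),
        dblBracket δ (e + f) g = dblBracket δ e g + dblBracket δ f g ∧
        dblBracket δ e (f + g) = dblBracket δ e f + dblBracket δ e g ∧
        dblBracket δ (r • e) g = r • dblBracket δ e g ∧
        dblBracket δ e (r • g) = r • dblBracket δ e g) ∧
    -- antisymmetry
    (∀ e f : Dual ℝ K × K, dblBracket δ e f = - dblBracket δ f e) ∧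
    -- Jacobi identity
    (∀ e f g : Dual ℝ K × K,
        dblBracket δ e (dblBracket δ f g)
          = dblBracket δ (dblBracket δ e f) g + dblBracket δ f (dblBracket δ e g)) :=
  ⟨fun e f g r => ⟨dblBracket_add_left δ e f g, dblBracket_add_right δ e f g,
      dblBracket_smul_left δ r e g, dblBracket_smul_right δ r e g⟩,
    dblBracket_anticomm hinv, dblBracket_leibniz hsym hinv⟩
end

section
/- Let K be a finite-dimensional real Lie algebra and ∂ : K* → K a linear map that is symmetric and K-invariant. Suppose D ⊆ K is a Lie subalgebra such that its annihilator D⁰ := {γ ∈ K* : γ|_D = 0} satisfies γ'(∂γ) = 0 for all γ, γ' ∈ D⁰. Then L := D⁰ × D ⊆ K* × K satisfies: (i) L is closed under the double bracket ⁅(γ,k),(γ',k')⁆ := (k·γ' − k'·γ + (∂γ)·γ', [k,k']); (ii) k + ∂γ ∈ D for all (γ,k) ∈ L; and (iii) L is Lagrangian for the pairing ⟨(γ,k),(γ',k')⟩ := (1/2)(γ(k') + γ'(k) + γ(∂γ')), i.e., L = L^⊥ := {e ∈ K* × K : ⟨e, e'⟩ = 0 for all e' ∈ L}. -/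
/-!
Isotropy of `D⁰` for `⌊γ, γ'⌋ = γ' (δ γ)`, combined with `D⁰⁰ = D`, says exactly that `δ` maps
`D⁰` into `D`. Given that, each claim reduces to evaluating functionals of `D⁰` on elements of `D`;
for the inclusion `L^⊥ ⊆ L` one pairs with `(0, d)` and `(γ, 0)`.
-/

open Module

/-- The pairing on `K* × K`: `⟨(γ,k),(γ',k')⟩ = (1/2)(γ(k') + γ'(k) + γ(δγ'))`. -/
noncomputable def dblPairing {K : Type*} [LieRing K] [LieAlgebra ℝ K] (δ : Dual ℝ K →ₗ[ℝ] K)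
    (e f : Dual ℝ K × K) : ℝ :=
  (1 / 2) * (e.1 f.2 + f.1 e.2 + e.1 (δ f.1))

namespace LieSubalgebra

variable {R K : Type*} [Field R] [LieRing K] [LieAlgebra R K]

theorem mem_of_forall_dual_eq_zero (D : LieSubalgebra R K) {x : K}
    (h : ∀ γ : Dual R K, (∀ d ∈ D, γ d = 0) → γ x = 0) : x ∈ D :=
  (Subspace.forall_mem_dualAnnihilator_apply_eq_zero_iff D.toSubmodule x).mp
    fun γ hγ => h γ ((Submodule.mem_dualAnnihilator γ).mp hγ)

end LieSubalgebra

section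

variable {K : Type*} [LieRing K] [LieAlgebra ℝ K] (δ : Dual ℝ K →ₗ[ℝ] K) (D : LieSubalgebra ℝ K)

def annihilatorProd : Set (Dual ℝ K × K) :=
  {e | (∀ d ∈ D, e.1 d = 0) ∧ e.2 ∈ D}

variable {δ D}

theorem mapsTo_of_isotropic
    (hiso : ∀ γ : Dual ℝ K, (∀ d ∈ D, γ d = 0) → ∀ γ' : Dual ℝ K, (∀ d ∈ D, γ' d = 0) →
      γ' (δ γ) = 0) :
    Set.MapsTo δ {γ | ∀ d ∈ D, γ d = 0} D :=
  fun γ hγ => D.mem_of_forall_dual_eq_zero fun γ' hγ' => hiso γ hγ γ' hγ'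

theorem dblBracket_mem_annihilatorProd
    (hδ : Set.MapsTo δ {γ | ∀ d ∈ D, γ d = 0} D) {e f : Dual ℝ K × K}
    (he : e ∈ annihilatorProd D) (hf : f ∈ annihilatorProd D) :
    dblBracket δ e f ∈ annihilatorProd D := by
  obtain ⟨he₁, he₂⟩ := he
  obtain ⟨hf₁, hf₂⟩ := hf
  refine ⟨fun d hd => ?_, D.lie_mem he₂ hf₂⟩
  simp only [dblBracket, coad, LinearMap.add_apply, LinearMap.sub_apply,
    LinearMap.neg_apply, LinearMap.comp_apply, LieAlgebra.ad_apply]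
  rw [hf₁ _ (D.lie_mem he₂ hd), he₁ _ (D.lie_mem hf₂ hd), hf₁ _ (D.lie_mem (hδ he₁) hd)]
  simp

theorem dblPairing_eq_zero_of_mem_annihilatorProd
    (hδ : Set.MapsTo δ {γ | ∀ d ∈ D, γ d = 0} D) {e f : Dual ℝ K × K}
    (he : e ∈ annihilatorProd D) (hf : f ∈ annihilatorProd D) : dblPairing δ e f = 0 := by
  rw [dblPairing, he.1 _ hf.2, hf.1 _ he.2, he.1 _ (hδ hf.1)]
  simp

theorem mem_annihilatorProd_of_dblPairing_eq_zero
    (hδ : Set.MapsTo δ {γ | ∀ d ∈ D, γ d = 0} D)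
    (hsym : ∀ γ γ' : Dual ℝ K, γ' (δ γ) = γ (δ γ')) {e : Dual ℝ K × K}
    (he : ∀ f ∈ annihilatorProd D, dblPairing δ e f = 0) : e ∈ annihilatorProd D := by
  have he₁ : ∀ d ∈ D, e.1 d = 0 := fun d hd => by
    simpa [dblPairing] using he (0, d) ⟨fun _ _ => rfl, hd⟩
  refine ⟨he₁, D.mem_of_forall_dual_eq_zero fun γ hγ => ?_⟩
  have hpair := he (γ, 0) ⟨hγ, D.zero_mem⟩
  rw [dblPairing, hsym, hγ _ (hδ he₁)] at hpair
  simpa using hpair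

end

theorem stmt9_general {K : Type*} [LieRing K] [LieAlgebra ℝ K]
    (δ : Dual ℝ K →ₗ[ℝ] K)
    (hsym : ∀ γ γ' : Dual ℝ K, γ' (δ γ) = γ (δ γ'))
    (D : LieSubalgebra ℝ K)
    (hiso : ∀ γ ∈ {γ : Dual ℝ K | ∀ d ∈ D, γ d = 0},
            ∀ γ' ∈ {γ : Dual ℝ K | ∀ d ∈ D, γ d = 0}, γ' (δ γ) = 0) :
    -- L := D⁰ × D
    let L : Set (Dual ℝ K × K) :=
      {e | (∀ d ∈ D, e.1 d = 0) ∧ e.2 ∈ D}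
    -- (i) L is closed under the double bracket
    (∀ e ∈ L, ∀ f ∈ L, dblBracket δ e f ∈ L) ∧
    -- (ii) L is closed under the groupoid target t(γ,k) = k + δγ
    (∀ e ∈ L, e.2 + δ e.1 ∈ D) ∧
    -- (iii) L is Lagrangian for the pairing
    (L = {e | ∀ f ∈ L, dblPairing δ e f = 0}) := by
  have hδ := mapsTo_of_isotropic hiso
  refine ⟨fun e he f hf => dblBracket_mem_annihilatorProd hδ he hf,
    fun e he => D.add_mem he.2 (hδ he.1), ?_⟩
  ext e
  exact ⟨fun he f hf => dblPairing_eq_zero_of_mem_annihilatorProd hδ he hf,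
    mem_annihilatorProd_of_dblPairing_eq_zero hδ hsym⟩

theorem stmt9 {K : Type*} [LieRing K] [LieAlgebra ℝ K] [FiniteDimensional ℝ K]
    (δ : Dual ℝ K →ₗ[ℝ] K)
    (hsym : ∀ γ γ' : Dual ℝ K, γ' (δ γ) = γ (δ γ'))
    (hinv : ∀ (k : K) (γ γ' : Dual ℝ K), γ ⁅k, δ γ'⁆ + γ' ⁅k, δ γ⁆ = 0)
    (D : LieSubalgebra ℝ K)
    (hiso : ∀ γ ∈ {γ : Dual ℝ K | ∀ d ∈ D, γ d = 0},
            ∀ γ' ∈ {γ : Dual ℝ K | ∀ d ∈ D, γ d = 0}, γ' (δ γ) = 0) :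
    -- L := D⁰ × D
    let L : Set (Dual ℝ K × K) :=
      {e | (∀ d ∈ D, e.1 d = 0) ∧ e.2 ∈ D}
    -- (i) L is closed under the double bracket
    (∀ e ∈ L, ∀ f ∈ L, dblBracket δ e f ∈ L) ∧
    -- (ii) L is closed under the groupoid target t(γ,k) = k + δγ
    (∀ e ∈ L, e.2 + δ e.1 ∈ D) ∧
    -- (iii) L is Lagrangian for the pairing
    (L = {e | ∀ f ∈ L, dblPairing δ e f = 0}) :=
  stmt9_general δ hsym D hiso
end

section
/- Let K be a finite-dimensional real Lie algebra and ∂ : K* → K a linear map that is symmetric and K-invariant. Let L ⊆ K* × K be a linear subspace such that: (i) L = L^⊥ with respect to the pairing ⟨(γ,k),(γ',k')⟩ := (1/2)(γ(k') + γ'(k) + γ(∂γ')); (ii) L is closed under the double bracket ⁅(γ,k),(γ',k')⁆ := (k·γ' − k'·γ + (∂γ)·γ', [k,k']); and (iii) (γ,k) ∈ L implies (0,k) ∈ L. Set D := {k ∈ K : (0,k) ∈ L}. Then D is a Lie subalgebra of K, its annihilator D⁰ := {γ ∈ K* : γ|_D = 0} satisfies γ'(∂γ) = 0 for all γ, γ'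 ∈ D⁰, and L = D⁰ × D. -/
/-!
By (iii), `L` splits as `A × D` with `A = {γ | (γ, 0) ∈ L}`. Pairing `(γ, 0)` with `(γ', 0)` shows
that `γ (δ γ')` vanishes on `A`, so `(0, δ γ)` is orthogonal to all of `L` for `γ ∈ A`, i.e.
`δ A ⊆ D`. Pairing `(γ, 0)` against `(0, d)`, and conversely against a general `(γ', k) ∈ L`
(using `k ∈ D` and `δ γ' ∈ D`), identifies `A` with `D⁰`. The double bracket of `(0, k)` and
`(0, k')` is `(0, ⁅k, k'⁆)`.
-/

open Module

theorem Submodule.mem_iff_of_zero_snd_mem {R M N : Type*} [Ring R] [AddCommGroup M]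
    [AddCommGroup N] [Module R M] [Module R N] {L : Submodule R (M × N)}
    (hL : ∀ e ∈ L, ((0 : M), e.2) ∈ L) {e : M × N} :
    e ∈ L ↔ (e.1, (0 : N)) ∈ L ∧ ((0 : M), e.2) ∈ L := by
  constructor
  · intro he
    have hsub : e - ((0 : M), e.2) = (e.1, 0) := by ext <;> simp
    exact ⟨hsub ▸ L.sub_mem he (hL e he), hL e he⟩
  · rintro ⟨hfst, hsnd⟩
    simpa using L.add_mem hfst hsnd

section DiracStructure

variable {K : Type*} [LieRing K] [LieAlgebra ℝ K] {δ : Dual ℝ K →ₗ[ℝ] K}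
  {L : Submodule ℝ (Dual ℝ K × K)}

theorem mem_iff_forall_dblPairing_eq_zero
    (hLag : (L : Set (Dual ℝ K × K)) = {e | ∀ f ∈ L, dblPairing δ e f = 0}) {e : Dual ℝ K × K} :
    e ∈ L ↔ ∀ f ∈ L, dblPairing δ e f = 0 :=
  Set.ext_iff.mp hLag e

theorem apply_apply_eq_zero_of_mk_zero_mem
    (hLag : (L : Set (Dual ℝ K × K)) = {e | ∀ f ∈ L, dblPairing δ e f = 0}) {γ γ' : Dual ℝ K}
    (hγ : (γ, (0 : K)) ∈ L) (hγ' : (γ', (0 : K)) ∈ L) : γ (δ γ') = 0 := by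
  have h := (mem_iff_forall_dblPairing_eq_zero hLag).mp hγ _ hγ'
  simpa [dblPairing] using h

theorem zero_mk_apply_mem
    (hLag : (L : Set (Dual ℝ K × K)) = {e | ∀ f ∈ L, dblPairing δ e f = 0})
    (hunit : ∀ e ∈ L, ((0 : Dual ℝ K), e.2) ∈ L) {γ : Dual ℝ K} (hγ : (γ, (0 : K)) ∈ L) :
    ((0 : Dual ℝ K), δ γ) ∈ L := by
  refine (mem_iff_forall_dblPairing_eq_zero hLag).mpr fun f hf => ?_
  have hfst : (f.1, (0 : K)) ∈ L := ((Submodule.mem_iff_of_zero_snd_mem hunit).mp hf).1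
  simp [dblPairing, apply_apply_eq_zero_of_mk_zero_mem hLag hfst hγ]

theorem mk_zero_mem_iff_forall_apply_eq_zero
    (hLag : (L : Set (Dual ℝ K × K)) = {e | ∀ f ∈ L, dblPairing δ e f = 0})
    (hunit : ∀ e ∈ L, ((0 : Dual ℝ K), e.2) ∈ L) {γ : Dual ℝ K} :
    (γ, (0 : K)) ∈ L ↔ ∀ d, ((0 : Dual ℝ K), d) ∈ L → γ d = 0 := by
  rw [mem_iff_forall_dblPairing_eq_zero hLag]
  constructor
  · intro hγ d hd
    simpa [dblPairing] using hγ _ hd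
  · intro hγ f hf
    have hfst : (f.1, (0 : K)) ∈ L := ((Submodule.mem_iff_of_zero_snd_mem hunit).mp hf).1
    simp [dblPairing, hγ _ (hunit f hf), hγ _ (zero_mk_apply_mem hLag hunit hfst)]

theorem zero_mk_lie_mem (hbr : ∀ e ∈ L, ∀ f ∈ L, dblBracket δ e f ∈ L) {k k' : K}
    (hk : ((0 : Dual ℝ K), k) ∈ L) (hk' : ((0 : Dual ℝ K), k') ∈ L) :
    ((0 : Dual ℝ K), ⁅k, k'⁆) ∈ L := by
  simpa [dblBracket, coad] using hbr _ hk _ hk'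

end DiracStructure

theorem stmt10_general {K : Type*} [LieRing K] [LieAlgebra ℝ K]
    (δ : Dual ℝ K →ₗ[ℝ] K)
    (L : Submodule ℝ (Dual ℝ K × K))
    -- (i) L is Lagrangian
    (hLag : (L : Set (Dual ℝ K × K)) = {e | ∀ f ∈ L, dblPairing δ e f = 0})
    -- (ii) L is closed under the double bracket
    (hbr : ∀ e ∈ L, ∀ f ∈ L, dblBracket δ e f ∈ L)
    -- (iii) L contains the units over its base
    (hunit : ∀ e ∈ L, ((0 : Dual ℝ K), e.2) ∈ L) :
    -- D := s(L)
    let D : Set K := {k : K | ((0 : Dual ℝ K), k) ∈ L}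
    -- D is a Lie subalgebra of K
    (∀ k ∈ D, ∀ k' ∈ D, ⁅k, k'⁆ ∈ D) ∧
    -- D⁰ is isotropic for ⌊γ,γ'⌋ = γ'(δγ)
    (∀ γ ∈ {γ : Dual ℝ K | ∀ d ∈ D, γ d = 0},
     ∀ γ' ∈ {γ : Dual ℝ K | ∀ d ∈ D, γ d = 0}, γ' (δ γ) = 0) ∧
    -- L = D⁰ × D
    ((L : Set (Dual ℝ K × K)) = {e | (∀ d ∈ D, e.1 d = 0) ∧ e.2 ∈ D}) := by
  intro D
  have hann (γ : Dual ℝ K) : (γ, (0 : K)) ∈ L ↔ ∀ d ∈ D, γ d = 0 :=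
    mk_zero_mem_iff_forall_apply_eq_zero hLag hunit
  refine ⟨fun k hk k' hk' => zero_mk_lie_mem hbr hk hk', ?_, ?_⟩
  · intro γ hγ γ' hγ'
    exact apply_apply_eq_zero_of_mk_zero_mem hLag ((hann γ').mpr hγ') ((hann γ).mpr hγ)
  · ext e
    rw [SetLike.mem_coe, Submodule.mem_iff_of_zero_snd_mem hunit, hann]
    rfl

theorem stmt10 {K : Type*} [LieRing K] [LieAlgebra ℝ K] [FiniteDimensional ℝ K]
    (δ : Dual ℝ K →ₗ[ℝ] K)
    (hsym : ∀ γ γ' : Dual ℝ K, γ' (δ γ) = γ (δ γ'))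
    (hinv : ∀ (k : K) (γ γ' : Dual ℝ K), γ ⁅k, δ γ'⁆ + γ' ⁅k, δ γ⁆ = 0)
    (L : Submodule ℝ (Dual ℝ K × K))
    -- (i) L is Lagrangian
    (hLag : (L : Set (Dual ℝ K × K)) = {e | ∀ f ∈ L, dblPairing δ e f = 0})
    -- (ii) L is closed under the double bracket
    (hbr : ∀ e ∈ L, ∀ f ∈ L, dblBracket δ e f ∈ L)
    -- (iii) L contains the units over its base
    (hunit : ∀ e ∈ L, ((0 : Dual ℝ K), e.2) ∈ L) :
    -- D := s(L)
    let D : Set K := {k : K | ((0 : Dual ℝ K), k) ∈ L}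
    -- D is a Lie subalgebra of K
    (∀ k ∈ D, ∀ k' ∈ D, ⁅k, k'⁆ ∈ D) ∧
    -- D⁰ is isotropic for ⌊γ,γ'⌋ = γ'(δγ)
    (∀ γ ∈ {γ : Dual ℝ K | ∀ d ∈ D, γ d = 0},
     ∀ γ' ∈ {γ : Dual ℝ K | ∀ d ∈ D, γ d = 0}, γ' (δ γ) = 0) ∧
    -- L = D⁰ × D
    ((L : Set (Dual ℝ K × K)) = {e | (∀ d ∈ D, e.1 d = 0) ∧ e.2 ∈ D}) :=
  stmt10_general δ L hLag hbr hunit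
end
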